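/- arXiv:2112.01469 — 4 statements merged into one kernel-verified Lean document; each statement's English description precedes it below -/
import Mathlib

section
/- Let A be an m×m integer matrix all of whose proper principal minors equal 1 and whose determinant equals 1. Then there exists a permutation matrix P such that P⁻¹AP is a unipotent upper triangular matrix (all diagonal entries 1 and all entries below the diagonal 0). -/
/-!
The diagonal entries are the `1 × 1` principal minors. Draw an edge `a → b` when `a ≠ b` and
`A a b ≠ 0`. A shortest cycle of this digraph has no chords, so on its vertex set the only
nonzero off-diagonal entries are the cycle edges and the principal minor there is
`1 ± ∏ (edge entries) ≠ 1`. Hence the digraph is acyclic, and numbering the indices along a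
linear extension of its reachability order makes `A` upper unitriangular.
-/

open Relation Function

namespace Relation

variable {α : Type*} {r : α → α → Prop}

/-- Addition in `Fin (n + 1)` wraps around, so `f` is a closed walk with `n + 1` edges. -/
def IsCycle (r : α → α → Prop) {n : ℕ} (f : Fin (n + 1) → α) : Prop :=
  ∀ i, r (f i) (f (i + 1))

theorem exists_path_of_transGen {a b : α} (h : TransGen r a b) :
    ∃ n, ∃ f : Fin (n + 1) → α, f 0 = a ∧ (∀ i : Fin n, r (f i.castSucc) (f i.succ)) ∧
      r (f (Fin.last n)) b := by
  induction h with
  | single hab => exact ⟨0, fun _ => a, rfl, Fin.elim0, hab⟩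
  | @tail b c _ hbc ih =>
    obtain ⟨n, f, hf0, hf, hfb⟩ := ih
    refine ⟨n + 1, Fin.snoc f b, ?_, fun i => ?_, by simpa using hbc⟩
    · rw [← Fin.castSucc_zero, Fin.snoc_castSucc, hf0]
    induction i using Fin.lastCases with
    | last => simpa using hfb
    | cast j => rw [Fin.succ_castSucc, Fin.snoc_castSucc, Fin.snoc_castSucc]; exact hf j

theorem exists_isCycle_of_transGen {a : α} (h : TransGen r a a) :
    ∃ n, ∃ f : Fin (n + 1) → α, IsCycle r f := by
  obtain ⟨n, f, hf0, hf, hfa⟩ := exists_path_of_transGen h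
  refine ⟨n, f, fun i => ?_⟩
  induction i using Fin.lastCases with
  | last => rw [Fin.last_add_one, hf0]; exact hfa
  | cast j => rw [Fin.coeSucc_eq_succ]; exact hf j

theorem exists_minimal_isCycle_of_transGen {a : α} (h : TransGen r a a) :
    ∃ n, ∃ f : Fin (n + 1) → α, IsCycle r f ∧ ∀ k < n, ∀ g : Fin (k + 1) → α, ¬IsCycle r g := by
  classical
  have hex := exists_isCycle_of_transGen h
  obtain ⟨f, hf⟩ := Nat.find_spec hex
  exact ⟨_, f, hf, fun k hk g hg => Nat.find_min hex hk ⟨g, hg⟩⟩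

open Fin.NatCast in
theorem IsCycle.shortcut {n : ℕ} {f : Fin (n + 1) → α} (hf : IsCycle r f) {p q : Fin (n + 1)}
    (hpq : r (f p) (f q)) : IsCycle r fun t : Fin ((p - q).val + 1) => f (q + t.val) := by
  intro t
  induction t using Fin.lastCases with
  | last => simpa [Fin.last_add_one] using hpq
  | cast j =>
    simp only [Fin.coeSucc_eq_succ, Fin.val_succ, Fin.val_castSucc, Nat.cast_succ, ← add_assoc]
    exact hf _

theorem IsCycle.eq_add_one_of_minimal {n : ℕ} {f : Fin (n + 1) → α} (hf : IsCycle r f)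
    (hmin : ∀ k < n, ∀ g : Fin (k + 1) → α, ¬IsCycle r g) {p q : Fin (n + 1)}
    (hpq : r (f p) (f q)) : q = p + 1 := by
  have hlen : (p - q).val = n := by
    by_contra hne
    exact hmin _ (by omega) _ (hf.shortcut hpq)
  have h : p - q + 1 = 0 := by rw [Fin.ext (hlen.trans (Fin.val_last n).symm), Fin.last_add_one]
  rw [sub_add_eq_add_sub, sub_eq_zero] at h
  exact h.symm

theorem IsCycle.injective_of_minimal {n : ℕ} {f : Fin (n + 1) → α} (hf : IsCycle r f)
    (hmin : ∀ k < n, ∀ g : Fin (k + 1) → α, ¬IsCycle r g) : Injective f := by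
  intro p q hpq
  have h := hf (p - 1)
  rw [sub_add_cancel, hpq] at h
  rw [hf.eq_add_one_of_minimal hmin h, sub_add_cancel]

theorem exists_equiv_fin_of_acyclic [Fintype α] {n : ℕ} (hn : Fintype.card α = n)
    (h : ∀ a, ¬TransGen r a a) : ∃ e : α ≃ Fin n, ∀ a b, r a b → e a < e b := by
  let : PartialOrder α :=
    { le := ReflTransGen r
      le_refl := fun _ => .refl
      le_trans := fun _ _ _ => ReflTransGen.trans
      le_antisymm := fun a b hab hba => by
        rcases reflTransGen_iff_eq_or_transGen.mp hab with rfl | hab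
        · rfl
        · exact (h a (hab.trans_left hba)).elim }
  let : Fintype (LinearExtension α) := ‹Fintype α›
  let o := (Fintype.orderIsoFinOfCardEq (LinearExtension α) hn).symm
  refine ⟨o.toEquiv, fun a b hab => o.strictMono ?_⟩
  have hlt : a < b := lt_of_le_not_ge (ReflTransGen.single hab)
    fun hba => h a (TransGen.head' hab hba)
  exact toLinearExtension.monotone.strictMono_of_injective injective_id hlt

end Relation

open Equiv

open Fin.NatCast in
theorem Equiv.Perm.eq_one_or_eq_finRotate {n : ℕ} {σ : Perm (Fin (n + 2))}
    (h : ∀ i, σ i = i ∨ σ i = i + 1) : σ = 1 ∨ σ = finRotate (n + 2) := by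
  by_cases hfix : ∀ i, σ i = i
  · exact Or.inl (Equiv.ext hfix)
  obtain ⟨i, hi⟩ := not_forall.mp hfix
  have hshift : ∀ t : ℕ, σ (i + t) = i + t + 1 := by
    intro t
    induction t with
    | zero => simpa using (h i).resolve_left hi
    | succ t ih =>
      rw [Nat.cast_succ, ← add_assoc]
      refine (h _).resolve_left fun hfixed => ?_
      exact one_ne_zero (add_eq_left.mp (σ.injective (hfixed.trans ih.symm)))
  refine Or.inr (Equiv.ext fun j => ?_)
  simpa [finRotate_apply] using hshift (j - i).val

namespace Matrix

variable {R : Type*} [CommRing R]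

theorem det_eq_one_add_prod_of_cyclic {n : ℕ} (M : Matrix (Fin (n + 2)) (Fin (n + 2)) R)
    (hdiag : ∀ i, M i i = 1) (hsupp : ∀ i j, M i j ≠ 0 → j = i ∨ j = i + 1) :
    M.det = 1 + (-1) ^ (n + 1) * ∏ i, M i (i + 1) := by
  have hne : (1 : Perm (Fin (n + 2))) ≠ finRotate (n + 2) := by
    intro h
    simpa using congrArg (· 0) h
  rw [← det_transpose, det_apply', Fintype.sum_eq_add 1 (finRotate (n + 2)) hne]
  · simp [hdiag, sign_finRotate]
  · rintro σ ⟨h1, hrot⟩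
    obtain ⟨i, hi⟩ : ∃ i, σ i ≠ i ∧ σ i ≠ i + 1 := by
      by_contra! h
      exact (Perm.eq_one_or_eq_finRotate fun i => or_iff_not_imp_left.mpr (h i)).elim h1 hrot
    have hzero : M i (σ i) = 0 := by
      by_contra h
      exact (hsupp i (σ i) h).elim hi.1 hi.2
    rw [Finset.prod_eq_zero (Finset.mem_univ i) hzero, mul_zero]

theorem det_submatrix_eq_det_submatrix_range {ι κ : Type*} [DecidableEq ι] [Fintype κ]
    [DecidableEq κ] (A : Matrix ι ι R) {f : κ → ι} (hf : Injective f) :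
    (A.submatrix f f).det = (A.submatrix (fun s : {x // x ∈ (Set.range f).toFinset} => (s : ι))
      (fun s : {x // x ∈ (Set.range f).toFinset} => (s : ι))).det := by
  let e : κ ≃ {x // x ∈ (Set.range f).toFinset} :=
    (Equiv.ofInjective f hf).trans (Equiv.subtypeEquivRight fun _ => Set.mem_toFinset.symm)
  rw [← det_submatrix_equiv_self e]
  rfl

variable {ι : Type*}

def AllPrincipalMinorsEqOne (A : Matrix ι ι R) : Prop :=
  ∀ n (f : Fin n → ι), Injective f → (A.submatrix f f).det = 1

def Adj (A : Matrix ι ι R) (a b : ι) : Prop :=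
  a ≠ b ∧ A a b ≠ 0

namespace AllPrincipalMinorsEqOne

variable {A : Matrix ι ι R}

theorem diag_eq_one (hA : A.AllPrincipalMinorsEqOne) (a : ι) : A a a = 1 := by
  simpa [det_fin_one] using hA 1 (fun _ => a) (injective_of_subsingleton _)

theorem not_transGen_adj [NoZeroDivisors R] [Nontrivial R] (hA : A.AllPrincipalMinorsEqOne)
    (a : ι) : ¬TransGen A.Adj a a := by
  intro ha
  obtain ⟨n, f, hf, hmin⟩ := exists_minimal_isCycle_of_transGen ha
  have hinj : Injective f := hf.injective_of_minimal hmin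
  cases n with
  | zero => exact (hf 0).1 (by simp)
  | succ k =>
    have hsupp : ∀ i j, A (f i) (f j) ≠ 0 → j = i ∨ j = i + 1 := fun i j hij =>
      or_iff_not_imp_left.mpr fun hji =>
        hf.eq_add_one_of_minimal hmin ⟨fun h => hji (hinj h).symm, hij⟩
    have hdet := det_eq_one_add_prod_of_cyclic (A.submatrix f f) (fun i => hA.diag_eq_one _) hsupp
    rw [hA _ f hinj, left_eq_add, (isUnit_neg_one.pow _).mul_right_eq_zero,
      Finset.prod_eq_zero_iff] at hdet
    obtain ⟨i, -, hi⟩ := hdet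
    exact (hf i).2 hi

end AllPrincipalMinorsEqOne

end Matrix

theorem unipotent_upper_triangular_of_principal_minors_one (m : ℕ)
    (A : Matrix (Fin m) (Fin m) ℤ)
    (hpp : ∀ S : Finset (Fin m), S ≠ Finset.univ →
      (A.submatrix (fun s : {x : Fin m // x ∈ S} => (s : Fin m))
        (fun s : {x : Fin m // x ∈ S} => (s : Fin m))).det = 1)
    (hdet : A.det = 1) :
    ∃ σ : Equiv.Perm (Fin m),
      (∀ i : Fin m, A (σ i) (σ i) = 1) ∧
        ∀ i j : Fin m, j < i → A (σ i) (σ j) = 0 := by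
  have hA : A.AllPrincipalMinorsEqOne := fun n f hf => by
    rw [Matrix.det_submatrix_eq_det_submatrix_range A hf]
    by_cases hS : (Set.range f).toFinset = Finset.univ
    · rw [hS]
      exact (Matrix.det_submatrix_equiv_self (Equiv.subtypeUnivEquiv Finset.mem_univ) A).trans hdet
    · exact hpp _ hS
  obtain ⟨e, he⟩ := Relation.exists_equiv_fin_of_acyclic (Fintype.card_fin m) hA.not_transGen_adj
  refine ⟨e.symm, fun i => hA.diag_eq_one _, fun i j hji => ?_⟩
  by_contra hij
  have hlt := he _ _ ⟨e.symm.injective.ne hji.ne', hij⟩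
  rw [e.apply_symm_apply, e.apply_symm_apply] at hlt
  exact hlt.not_gt hji
end

section
/- Let m ≥ 2 and let a_2, ..., a_m ∈ ℤ. Let M be the m×m integer matrix with M_{jj} = -1 for all j, M_{j,j+1} = a_{j+1} for j = 1,...,m-1, M_{m,1} = 1, and zeros elsewhere, and suppose det M = 0. Then a_2 a_3 ⋯ a_m = 1, and if the system adj(M)·b = (-1)^m·𝟙 has an integer solution b, then a_j = 1 for all j = 2,...,m. -/
theorem solvability_forces_entries_one (m : ℕ) (hm : 2 ≤ m) [NeZero m]
    (a : Fin m → ℤ) (M : Matrix (Fin m) (Fin m) ℤ)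
    (hM : ∀ i j : Fin m, M i j =
      if i = j then -1
      else if (j : ℕ) = (i : ℕ) + 1 then a j
      else if (i : ℕ) = m - 1 ∧ (j : ℕ) = 0 then 1
      else 0)
    (hdet : M.det = 0) :
    (∏ j ∈ Finset.univ.erase (0 : Fin m), a j) = 1 ∧
      ((∃ b : Fin m → ℤ, M.adjugate.mulVec b = fun _ => (-1) ^ m) →
        ∀ j : Fin m, j ≠ 0 → a j = 1) := by
  obtain ⟨n, rfl⟩ : ∃ n, m = n + 1 := ⟨m - 1, (Nat.succ_pred_eq_of_pos (by omega)).symm⟩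
  have hn : 1 ≤ n := by omega
  -- the product over the erased set equals the product over Fin n of successors
  have hprod : (∏ j ∈ Finset.univ.erase (0 : Fin (n+1)), a j) = ∏ j : Fin n, a j.succ := by
    refine (Finset.prod_nbij (fun j => j.succ) ?_ ?_ ?_ ?_).symm
    · intro i _; simp [Fin.succ_ne_zero]
    · intro i _ j _ h; exact Fin.succ_injective _ h
    · intro j hj
      obtain ⟨i, rfl⟩ := Fin.exists_succ_eq.mpr (Finset.mem_erase.mp hj).1
      exact ⟨i, Finset.mem_coe.mpr (Finset.mem_univ i), rfl⟩
    · intro i _; rfl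
  -- Part 1 : determinant computation
  have hdetval : M.det = (-1)^(n+1) * (1 - ∏ j : Fin n, a j.succ) := by
    rw [Matrix.det_succ_column_zero]
    have hcol : ∀ i : Fin (n+1), M i 0 = if i = 0 then -1 else if (i:ℕ) = n then 1 else 0 := by
      intro i
      rw [hM]
      rcases eq_or_ne i (0 : Fin (n+1)) with h | h
      · simp [h]
      · have : ((0:Fin (n+1)) : ℕ) ≠ (i:ℕ) + 1 := by simp
        simp [h, this, Ne.symm h]
    have hsum : ∀ i : Fin (n+1), i ∈ Finset.univ →
        i ∉ ({0, Fin.last n} : Finset (Fin (n+1))) →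
        (-1:ℤ) ^ (i : ℕ) * M i 0 * (M.submatrix i.succAbove Fin.succ).det = 0 := by
      intro i _ hi
      simp only [Finset.mem_insert, Finset.mem_singleton] at hi
      push_neg at hi
      have h1 : i ≠ 0 := hi.1
      have h2 : (i:ℕ) ≠ n := fun h => hi.2 (Fin.ext h)
      rw [hcol, if_neg h1, if_neg h2]; ring
    rw [← Finset.sum_subset (Finset.subset_univ ({0, Fin.last n} : Finset (Fin (n+1))))
      (fun i hu hi => hsum i hu hi)]
    have h0last : (0 : Fin (n+1)) ≠ Fin.last n := by
      intro h; have := congrArg Fin.val h; simp at this; omega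
    rw [Finset.sum_pair h0last]
    -- term at 0
    have hA : (M.submatrix (Fin.succAbove 0) Fin.succ).det = (-1)^n := by
      have htri : (M.submatrix (Fin.succAbove 0) Fin.succ).BlockTriangular id := by
        intro i j hij
        simp only [Matrix.submatrix_apply, Fin.succAbove_zero]
        rw [hM]
        have h1 : i.succ ≠ j.succ := by
          intro h; exact absurd (Fin.succ_injective _ h) (ne_of_gt hij)
        have h2 : ((j.succ : Fin (n+1)) : ℕ) ≠ ((i.succ : Fin (n+1)) : ℕ) + 1 := by
          simp only [Fin.val_succ]
          have : (j:ℕ) < i := hij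
          omega
        have h3 : ((j.succ : Fin (n+1)) : ℕ) ≠ 0 := by simp
        have hlt : (j:ℕ) < (i:ℕ) := hij
        simp only [hM, if_neg h1]
        rw [if_neg h2, if_neg (by simp)]
      rw [Matrix.det_of_upperTriangular htri]
      have : ∀ i : Fin n, (M.submatrix (Fin.succAbove 0) Fin.succ) i i = -1 := by
        intro i
        simp only [Matrix.submatrix_apply, Fin.succAbove_zero]
        rw [hM]; simp
      rw [Finset.prod_congr rfl (fun i _ => this i)]
      simp
    -- term at last
    have hB : (M.submatrix (Fin.succAbove (Fin.last n)) Fin.succ).det = ∏ j : Fin n, a j.succ := by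
      have htri : (M.submatrix (Fin.succAbove (Fin.last n)) Fin.succ).BlockTriangular
          OrderDual.toDual := by
        intro i j hij
        have hij' : (i:ℕ) < (j:ℕ) := hij
        simp only [Matrix.submatrix_apply, Fin.succAbove_last]
        rw [hM]
        have h1 : (i.castSucc : Fin (n+1)) ≠ j.succ := by
          intro h; have := congrArg Fin.val h; simp at this; omega
        have h2 : ((j.succ : Fin (n+1)) : ℕ) ≠ ((i.castSucc : Fin (n+1)) : ℕ) + 1 := by
          simp; omega
        have h3 : ((j.succ : Fin (n+1)) : ℕ) ≠ 0 := by simp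
        simp only [hM, if_neg h1]
        rw [if_neg h2, if_neg (by simp)]
      rw [Matrix.det_of_lowerTriangular _ htri]
      refine Finset.prod_congr rfl (fun i _ => ?_)
      simp only [Matrix.submatrix_apply, Fin.succAbove_last]
      rw [hM]
      have h1 : (i.castSucc : Fin (n+1)) ≠ i.succ := by
        intro h; have := congrArg Fin.val h; simp at this
      have h2 : ((i.succ : Fin (n+1)) : ℕ) = ((i.castSucc : Fin (n+1)) : ℕ) + 1 := by simp
      simp [h1, h2]
    rw [hA, hB, hcol, hcol]
    have hl0 : Fin.last n ≠ 0 := by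
      intro h; have := congrArg Fin.val h; simp at this; omega
    rw [if_pos rfl, if_neg hl0, if_pos (by simp)]
    simp only [Fin.val_zero, Fin.val_last, pow_zero]
    ring
  have hprod1 : (∏ j : Fin n, a j.succ) = 1 := by
    rw [hdetval] at hdet
    rcases mul_eq_zero.mp hdet with h | h
    · exact absurd h (pow_ne_zero _ (by norm_num))
    · linarith
  refine ⟨by rw [hprod]; exact hprod1, ?_⟩
  -- Part 2
  rintro ⟨b, hb⟩ j hj
  have hMc : M.mulVec (fun _ => ((-1:ℤ)) ^ (n+1)) = 0 := by
    rw [← hb, Matrix.mulVec_mulVec, Matrix.mul_adjugate, hdet, zero_smul, Matrix.zero_mulVec]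
  obtain ⟨k, rfl⟩ := Fin.exists_succ_eq_of_ne_zero hj
  have hcs : (k.castSucc : Fin (n+1)) ≠ k.succ := (Fin.castSucc_lt_succ : k.castSucc < k.succ).ne
  have hrow : ∀ x : Fin (n+1), M k.castSucc x =
      (if x = k.castSucc then (-1:ℤ) else 0) + (if x = k.succ then a x else 0) := by
    intro x
    rw [hM]
    by_cases h1 : x = k.castSucc
    · subst h1
      simp [hcs]
    · rw [if_neg (fun h => h1 h.symm), if_neg h1]
      by_cases h2 : x = k.succ
      · subst h2
        rw [if_pos (by simp), if_pos rfl]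
        ring
      · have hv : ((x : Fin (n+1)) : ℕ) ≠ ((k.castSucc : Fin (n+1)):ℕ) + 1 := by
          intro h
          exact h2 (Fin.ext (by simp at h ⊢; omega))
        rw [if_neg hv, if_neg h2, if_neg (by simp; omega)]
        ring
  have hzero := congrFun hMc k.castSucc
  simp only [Matrix.mulVec, dotProduct, Pi.zero_apply] at hzero
  rw [Finset.sum_congr rfl (fun x _ => by rw [hrow x])] at hzero
  simp only [add_mul, Finset.sum_add_distrib, ite_mul, zero_mul,
    Finset.sum_ite_eq' Finset.univ, Finset.mem_univ, if_true] at hzero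
  have hpow : ((-1:ℤ))^(n+1) ≠ 0 := pow_ne_zero _ (by norm_num)
  have h0 : (-1 + a k.succ) * (-1:ℤ)^(n+1) = 0 := by linear_combination hzero
  rcases mul_eq_zero.mp h0 with h | h
  · linarith
  · exact absurd h hpow
end

section
/- Let A be a 3×3 integer matrix with 1's on the diagonal, all 2×2 principal minors equal to 1 (so a_{12}a_{21} = a_{13}a_{31} = a_{23}a_{32} = 0), and det A = -1. Then after a simultaneous permutation of rows and columns A has the cyclic form with a_{12}, a_{23}, a_{31} nonzero, a_{21} = a_{32} = a_{13} = 0, and a_{12}·a_{23}·a_{31} = -2. -/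
theorem three_by_three_det_neg_one_classification (A : Matrix (Fin 3) (Fin 3) ℤ)
    (hdiag : ∀ i : Fin 3, A i i = 1)
    (hminor : ∀ i j : Fin 3, i ≠ j → A i i * A j j - A i j * A j i = 1)
    (hdet : A.det = -1) :
    ∃ σ : Equiv.Perm (Fin 3),
      A (σ 0) (σ 1) ≠ 0 ∧ A (σ 1) (σ 2) ≠ 0 ∧ A (σ 2) (σ 0) ≠ 0 ∧
      A (σ 1) (σ 0) = 0 ∧ A (σ 2) (σ 1) = 0 ∧ A (σ 0) (σ 2) = 0 ∧
      A (σ 0) (σ 1) * A (σ 1) (σ 2) * A (σ 2) (σ 0) = -2 := by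
  have h01 := hminor 0 1 (by decide)
  have h02 := hminor 0 2 (by decide)
  have h12 := hminor 1 2 (by decide)
  rw [hdiag, hdiag] at h01 h02 h12
  have hpq : A 0 1 * A 1 0 = 0 := by linarith
  have hrs : A 0 2 * A 2 0 = 0 := by linarith
  have htu : A 1 2 * A 2 1 = 0 := by linarith
  rw [Matrix.det_fin_three, hdiag, hdiag, hdiag] at hdet
  have hsum : A 0 1 * A 1 2 * A 2 0 + A 0 2 * A 1 0 * A 2 1 = -2 := by nlinarith
  rcases mul_eq_zero.mp hpq with hp | hq <;>
  rcases mul_eq_zero.mp hrs with hr | hs <;>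
  rcases mul_eq_zero.mp htu with ht | hu
  -- p=0,r=0,t=0
  · exfalso; rw [hp, hr] at hsum; simp at hsum
  -- p=0,r=0,u=0
  · exfalso; rw [hp, hr] at hsum; simp at hsum
  -- p=0,s=0,t=0 : swap case
  · refine ⟨Equiv.swap 1 2, ?_⟩
    have e0 : (Equiv.swap (1 : Fin 3) 2) 0 = 0 :=
      Equiv.swap_apply_of_ne_of_ne (by decide) (by decide)
    have e1 : (Equiv.swap (1 : Fin 3) 2) 1 = 2 := Equiv.swap_apply_left 1 2
    have e2 : (Equiv.swap (1 : Fin 3) 2) 2 = 1 := Equiv.swap_apply_right 1 2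
    rw [e0, e1, e2]
    rw [hp, hs, ht] at hsum ⊢
    simp only [zero_mul, mul_zero, zero_add] at hsum
    have hprod : A 0 2 * A 2 1 * A 1 0 = -2 := by linarith
    have h3 : A 0 2 * A 2 1 * A 1 0 ≠ 0 := by rw [hprod]; decide
    refine ⟨fun h => h3 (by rw [h]; ring), fun h => h3 (by rw [h]; ring),
      fun h => h3 (by rw [h]; ring), rfl, rfl, rfl, hprod⟩
  -- p=0,s=0,u=0
  · exfalso; rw [hp, hu] at hsum; simp at hsum
  -- q=0,r=0,t=0
  · exfalso; rw [ht, hr] at hsum; simp at hsum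
  -- q=0,r=0,u=0 : identity case
  · refine ⟨Equiv.refl _, ?_⟩
    simp only [Equiv.refl_apply]
    rw [hq, hr, hu] at hsum ⊢
    simp only [zero_mul, mul_zero, add_zero] at hsum
    have h3 : A 0 1 * A 1 2 * A 2 0 ≠ 0 := by rw [hsum]; decide
    refine ⟨fun h => h3 (by rw [h]; ring), fun h => h3 (by rw [h]; ring),
      fun h => h3 (by rw [h]; ring), rfl, rfl, rfl, hsum⟩
  -- q=0,s=0,t=0
  · exfalso; rw [hq, ht] at hsum; simp at hsum
  -- q=0,s=0,u=0
  · exfalso; rw [hq, hs] at hsum; simp at hsum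
end

section
/- Let m ≥ 2 and let M be the m×m integer matrix with M_{jj} = -1, M_{j,j+1} = a_{j+1} for j = 1,...,m-1, M_{m,1} = a_1, and zeros elsewhere, with d := det M = (-1)^m(1 - a_1⋯a_m) ≠ 0. Define b ∈ ℚ^m by b_j = ((-1)^m/d)·(a_{j+1} - 1) for j = 1,...,m-1 and b_m = ((-1)^m/d)·(a_1 - 1). Then adj(M)·b = (-1)^m·𝟙, where 𝟙 is the all-ones vector. -/
/-! Since `adj M * M = d • 1` and `d ≠ 0`, it suffices to check `M *ᵥ (-1)^m 𝟙 = d • b`, which says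
that the `i`-th row sum of `M` is `a (i + 1) - 1`. -/

open Matrix

theorem Matrix.adjugate_mulVec_eq_of_mulVec_eq {R n : Type*} [CommRing R] [IsDomain R]
    [Fintype n] [DecidableEq n] {M : Matrix n n R} (hM : M.det ≠ 0) {v b : n → R}
    (h : M *ᵥ v = M.det • b) : M.adjugate *ᵥ b = v := by
  apply smul_right_injective (n → R) hM
  calc M.det • (M.adjugate *ᵥ b) = M.adjugate *ᵥ (M *ᵥ v) := by rw [h, mulVec_smul]
    _ = M.det • v := by rw [mulVec_mulVec, adjugate_mul, smul_mulVec, one_mulVec]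

theorem Fin.add_one_ne_self {m : ℕ} [NeZero m] (hm : 2 ≤ m) (i : Fin m) : i + 1 ≠ i := by
  rw [Ne, add_eq_left]
  obtain ⟨k, rfl⟩ : ∃ k, m = k + 1 := ⟨m - 1, by omega⟩
  rw [Fin.one_eq_zero_iff]
  omega

theorem Fin.sum_ite_eq_ite_add_one {α : Type*} [AddCommMonoid α] {m : ℕ} [NeZero m]
    (hm : 2 ≤ m) (i : Fin m) (c : α) (f : Fin m → α) :
    ∑ k, (if i = k then c else if k = i + 1 then f k else 0) = c + f (i + 1) := by
  have hne := Fin.add_one_ne_self hm i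
  rw [Fintype.sum_eq_add i (i + 1) hne.symm]
  · simp only [if_true, hne.symm, if_false]
  · rintro k ⟨hki, hk⟩
    simp [Ne.symm hki, hk]

theorem adjugate_mulVec_b_formula_general (m : ℕ) (hm : 2 ≤ m) [NeZero m]
    (a : Fin m → ℤ) (M : Matrix (Fin m) (Fin m) ℚ)
    (hM : ∀ i j : Fin m, M i j =
      if i = j then -1 else if j = i + 1 then (a j : ℚ) else 0)
    (hd0 : M.det ≠ 0)
    (b : Fin m → ℚ)
    (hb : ∀ j : Fin m, b j = ((-1) ^ m / M.det) * ((a (j + 1) : ℚ) - 1)) :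
    M.adjugate.mulVec b = fun _ => (-1) ^ m := by
  refine M.adjugate_mulVec_eq_of_mulVec_eq hd0 (funext fun i => ?_)
  have hrow : ∑ k, M i k = (a (i + 1) : ℚ) - 1 := by
    simp_rw [hM, Fin.sum_ite_eq_ite_add_one hm]
    ring
  calc (M *ᵥ fun _ => (-1) ^ m) i = (∑ k, M i k) * (-1) ^ m := by
        simp only [mulVec, dotProduct, Finset.sum_mul]
    _ = (M.det • b) i := by
        rw [hrow, Pi.smul_apply, hb, smul_eq_mul]
        field_simp

theorem adjugate_mulVec_b_formula (m : ℕ) (hm : 2 ≤ m) [NeZero m]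
    (a : Fin m → ℤ) (M : Matrix (Fin m) (Fin m) ℚ)
    (hM : ∀ i j : Fin m, M i j =
      if i = j then -1 else if j = i + 1 then (a j : ℚ) else 0)
    (hd : M.det = (-1) ^ m * (1 - ∏ j, (a j : ℚ)))
    (hd0 : M.det ≠ 0)
    (b : Fin m → ℚ)
    (hb : ∀ j : Fin m, b j = ((-1) ^ m / M.det) * ((a (j + 1) : ℚ) - 1)) :
    M.adjugate.mulVec b = fun _ => (-1) ^ m :=
  adjugate_mulVec_b_formula_general m hm a M hM hd0 b hb
end
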